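/- arXiv:1305.4214 — 3 statements merged into one kernel-verified Lean document; each statement's English description precedes it below -/
import Mathlib

section
/- For every a > 1 there exists a transcendental entire (or meromorphic) function f such that T(r,f) ≤ log^a r for all sufficiently large r; i.e., the Nevanlinna characteristic of a transcendental function can grow slower than any prescribed power log^a r with a > 1. -/
/-!
Take `f z = ∑ exp (-eⁿ) zⁿ`. On `|z| = eᵗ` the terms are `exp (n t - eⁿ)`, and the Legendre
inequality `n s - eⁿ ≤ s log s - s` at `s = t + 1` bounds them by `exp (s log s - s) e⁻ⁿ`. Hence
`T(eᵗ, f) = m(eᵗ, f) ≤ log⁺ M(eᵗ, f) ≤ (t + 1) log (t + 1)`, which is `o(tᵃ)` for every `a > 1`,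
while `f` has infinitely many nonzero Taylor coefficients and so is not a polynomial.
-/

open Real Filter Asymptotics FormalMultilinearSeries Polynomial

section NotPolynomial

variable {𝕜 : Type*} [NontriviallyNormedField 𝕜]

theorem Polynomial.hasFPowerSeriesOnBall_eval (q : 𝕜[X]) :
    HasFPowerSeriesOnBall (fun z => q.eval z) (ofScalars 𝕜 (q.coeff ·)) 0 ⊤ := by
  have hvanish : ∀ n, q.natDegree < n → q.coeff n = 0 := fun n => q.coeff_eq_zero_of_natDegree_lt
  refine ⟨(radius_eq_top_of_eventually_eq_zero (p := ofScalars 𝕜 (q.coeff ·)) ?_).ge,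
    ENNReal.zero_lt_top, fun {y} _ => ?_⟩
  · filter_upwards [eventually_gt_atTop q.natDegree] with n hn
    exact ofScalars_eq_zero_of_scalar_zero _ (hvanish n hn)
  · have hsum := hasSum_sum_of_ne_finset_zero (L := .unconditional ℕ)
      (s := Finset.range (q.natDegree + 1))
      (f := fun n => ofScalars 𝕜 (q.coeff ·) n fun _ => y) fun n hn => by
        rw [ofScalars_apply_eq, hvanish n (by simpa using hn), zero_smul]
    simpa [eval_eq_sum_range, ofScalars_apply_eq, mul_comm] using hsum

theorem not_exists_polynomial_eq_of_hasFPowerSeriesAt {f : 𝕜 → 𝕜} {c : ℕ → 𝕜}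
    (hf : HasFPowerSeriesAt f (ofScalars 𝕜 c) 0) (hc : {n | c n ≠ 0}.Infinite) :
    ¬ ∃ q : 𝕜[X], ∀ z, f z = q.eval z := by
  rintro ⟨q, hq⟩
  have hcoeff : c = (q.coeff ·) := ofScalars_series_injective 𝕜 𝕜 <|
    hf.eq_formalMultilinearSeries (funext hq ▸ q.hasFPowerSeriesOnBall_eval.hasFPowerSeriesAt)
  obtain ⟨n, hn, hlt⟩ := hc.exists_gt q.natDegree
  exact hn (hcoeff ▸ q.coeff_eq_zero_of_natDegree_lt hlt)

end NotPolynomial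

theorem mul_sub_exp_le_mul_log_sub (x : ℝ) {s : ℝ} (hs : 0 < s) :
    x * s - exp x ≤ s * log s - s := by
  have h := add_one_le_exp (x - log s)
  rw [exp_sub, exp_log hs, le_div_iff₀ hs] at h
  linarith

theorem exp_neg_exp_mul_exp_pow_le {t : ℝ} (ht : -1 < t) (n : ℕ) :
    exp (-exp n) * exp t ^ n ≤ exp ((t + 1) * log (t + 1) - (t + 1)) * (1 / 2) ^ n := by
  calc exp (-exp n) * exp t ^ n = exp (n * (t + 1) - exp n) * exp (-1) ^ n := by
        rw [← exp_nat_mul, ← exp_nat_mul, ← exp_add, ← exp_add]; ring_nf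
    _ ≤ exp ((t + 1) * log (t + 1) - (t + 1)) * (1 / 2) ^ n := by
        gcongr ?_ * ?_
        · exact exp_le_exp.2 (mul_sub_exp_le_mul_log_sub _ (by linarith))
        · exact pow_le_pow_left₀ (exp_nonneg _) exp_neg_one_lt_half.le n

noncomputable def slowCoeff (n : ℕ) : ℂ := (exp (-exp n) : ℝ)

noncomputable def slowEntire : ℂ → ℂ := ofScalarsSum slowCoeff

theorem norm_slowCoeff (n : ℕ) : ‖slowCoeff n‖ = exp (-exp n) := by
  rw [slowCoeff, Complex.norm_real, norm_of_nonneg (exp_nonneg _)]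

theorem norm_slowCoeff_mul_pow_le {t : ℝ} (ht : -1 < t) {x : ℝ} (hx0 : 0 ≤ x) (hx : x ≤ exp t)
    (n : ℕ) : ‖slowCoeff n‖ * x ^ n ≤ exp ((t + 1) * log (t + 1) - (t + 1)) * (1 / 2) ^ n := by
  rw [norm_slowCoeff]
  exact (mul_le_mul_of_nonneg_left (pow_le_pow_left₀ hx0 hx n) (exp_nonneg _)).trans
    (exp_neg_exp_mul_exp_pow_le ht n)

theorem radius_ofScalars_slowCoeff : (ofScalars ℂ slowCoeff).radius = ⊤ := by
  refine radius_eq_top_of_summable_norm _ fun r => ?_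
  have hr : (r : ℝ) ≤ exp r := by linarith [add_one_le_exp r]
  refine Summable.of_nonneg_of_le (fun _ => by positivity) (fun n => ?_)
    (summable_geometric_two.mul_left (exp ((r + 1) * log (r + 1) - (r + 1))))
  rw [ofScalars_norm]
  exact norm_slowCoeff_mul_pow_le (by linarith [r.2]) r.2 hr n

theorem hasFPowerSeriesOnBall_slowEntire :
    HasFPowerSeriesOnBall slowEntire (ofScalars ℂ slowCoeff) 0 ⊤ :=
  radius_ofScalars_slowCoeff ▸ (ofScalars ℂ slowCoeff).hasFPowerSeriesOnBall
    (radius_ofScalars_slowCoeff ▸ ENNReal.zero_lt_top)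

theorem differentiable_slowEntire : Differentiable ℂ slowEntire := by
  rw [← differentiableOn_univ, ← Metric.eball_top_eq_univ 0]
  exact hasFPowerSeriesOnBall_slowEntire.differentiableOn

theorem not_exists_polynomial_eq_slowEntire : ¬ ∃ q : ℂ[X], ∀ z, slowEntire z = q.eval z := by
  refine not_exists_polynomial_eq_of_hasFPowerSeriesAt
    hasFPowerSeriesOnBall_slowEntire.hasFPowerSeriesAt ?_
  simpa [slowCoeff, (exp_pos _).ne'] using Set.infinite_univ

theorem norm_slowEntire_le {t : ℝ} (ht : -1 < t) {z : ℂ} (hz : ‖z‖ ≤ exp t) :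
    ‖slowEntire z‖ ≤ 2 * exp ((t + 1) * log (t + 1) - (t + 1)) := by
  rw [slowEntire, ofScalars_sum_eq, mul_comm]
  refine tsum_of_norm_bounded (hasSum_geometric_two.mul_left _) fun n => ?_
  rw [norm_smul, norm_pow]
  exact norm_slowCoeff_mul_pow_le ht (norm_nonneg z) hz n

theorem posLog_norm_slowEntire_le {t : ℝ} (ht : 0 ≤ t) {z : ℂ} (hz : ‖z‖ ≤ exp t) :
    log⁺ ‖slowEntire z‖ ≤ (t + 1) * log (t + 1) := by
  have hlog : 0 ≤ (t + 1) * log (t + 1) := mul_nonneg (by linarith) (log_nonneg (by linarith))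
  refine (posLog_le_posLog (norm_nonneg _) (norm_slowEntire_le (by linarith) hz)).trans ?_
  refine max_le hlog ?_
  show log _ ≤ _
  rw [log_mul two_ne_zero (exp_pos _).ne', log_exp]
  linarith [log_two_lt_d9]

theorem isLittleO_mul_log_rpow {a : ℝ} (ha : 1 < a) : (fun u => u * log u) =o[atTop] (· ^ a) := by
  refine ((isBigO_refl (fun u : ℝ => u) atTop).mul_isLittleO
    (isLittleO_log_rpow_atTop (sub_pos.2 ha))).congr' EventuallyEq.rfl ?_
  filter_upwards [eventually_gt_atTop 0] with u hu
  rw [rpow_sub_one hu.ne', mul_div_cancel₀ _ hu.ne']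

theorem eventually_add_one_mul_log_le_rpow {a : ℝ} (ha : 1 < a) :
    ∀ᶠ t in atTop, (t + 1) * log (t + 1) ≤ t ^ a := by
  have hshift : (fun t : ℝ => (t + 1) ^ a) =O[atTop] (· ^ a) := by
    refine IsBigO.of_bound (2 ^ a) ?_
    filter_upwards [eventually_ge_atTop 1] with t ht
    rw [norm_of_nonneg (rpow_nonneg (by linarith) a), norm_of_nonneg (by positivity),
      ← mul_rpow (by norm_num) (by linarith)]
    exact rpow_le_rpow (by linarith) (by linarith) (by linarith)
  filter_upwards [(((isLittleO_mul_log_rpow ha).comp_tendsto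
    (tendsto_atTop_add_const_right _ 1 tendsto_id)).trans_isBigO hshift).bound one_pos,
    eventually_ge_atTop 0] with t ht ht0
  rw [one_mul, norm_eq_abs, norm_eq_abs, abs_of_nonneg (rpow_nonneg ht0 a)] at ht
  exact (le_abs_self _).trans ht

theorem circleAverage_posLog_norm_eq_integral {E : Type*} [NormedAddCommGroup E] (f : ℂ → E)
    (r : ℝ) : circleAverage (fun z => log⁺ ‖f z‖) 0 r = (2 * π)⁻¹ *
      ∫ φ in (0:ℝ)..(2 * π), max (log ‖f ((r : ℂ) * Complex.exp (φ * Complex.I))‖) 0 := by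
  simp [circleAverage, circleMap, posLog_def, max_comm]

theorem transcendental_entire_slow_growth (a : ℝ) (ha : 1 < a) :
    ∃ f : ℂ → ℂ, Differentiable ℂ f ∧
      (¬ ∃ p : Polynomial ℂ, ∀ z : ℂ, f z = p.eval z) ∧
      ∃ r₀ : ℝ, ∀ r ≥ r₀,
        (2 * Real.pi)⁻¹ *
          (∫ φ in (0:ℝ)..(2 * Real.pi),
            max (Real.log ‖f ((r : ℂ) * Complex.exp (φ * Complex.I))‖) 0)
        ≤ (Real.log r) ^ a := by
  obtain ⟨t₀, ht₀⟩ :=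
    ((eventually_add_one_mul_log_le_rpow ha).and (eventually_ge_atTop 0)).exists_forall_of_atTop
  refine ⟨slowEntire, differentiable_slowEntire, not_exists_polynomial_eq_slowEntire, exp t₀,
    fun r hr => ?_⟩
  have hr0 : 0 < r := (exp_pos t₀).trans_le hr
  obtain ⟨hgrowth, hlog0⟩ := ht₀ (log r) ((le_log_iff_exp_le hr0).2 hr)
  rw [← circleAverage_posLog_norm_eq_integral]
  have hcont : Continuous fun z => log⁺ ‖slowEntire z‖ :=
    continuous_posLog.comp differentiable_slowEntire.continuous.norm
  refine circleAverage_mono_on_of_le_circle hcont.continuousOn.circleIntegrable'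
    fun z hz => (posLog_norm_slowEntire_le hlog0 ?_).trans hgrowth
  rw [mem_sphere_zero_iff_norm.1 hz, exp_log hr0, abs_of_pos hr0]
end

section
/- An infinite, connected, locally finite graph G of finite valence is parabolic (the modulus of chains from a fixed vertex to infinity is zero) whenever there exists a sequence (A_k) of pairwise disjoint nested annuli, each separating a fixed vertex v₀ from ∞, with Σ_k 1/mod(A_k) = ∞. -/
open scoped ENNReal

/-- A chain in a graph: a sequence of vertices (finite if `len < ⊤`, one-sidedly
infinite if `len = ⊤`), consecutive vertices being adjacent. -/
structure GChain {V : Type*} (G : SimpleGraph V) where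
  f : ℕ → V
  len : ℕ∞
  adj : ∀ i : ℕ, (i : ℕ∞) < len → G.Adj (f i) (f (i + 1))

/-- The weighted length `Σ m(x_j)` of a chain with respect to a mass distribution. -/
noncomputable def wlen {V : Type*} {G : SimpleGraph V} (m : V → ℝ≥0∞) (c : GChain G) : ℝ≥0∞ :=
  ∑' i : ℕ, if (i : ℕ∞) ≤ c.len then m (c.f i) else 0

/-- Admissibility: every chain of the family has weighted length at least 1. -/
def Admissible {V : Type*} {G : SimpleGraph V} (m : V → ℝ≥0∞) (F : Set (GChain G)) : Prop :=
  ∀ c ∈ F, 1 ≤ wlen m c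

/-- The combinatorial (vertex) modulus of a family of chains. -/
noncomputable def gmod {V : Type*} (G : SimpleGraph V) (F : Set (GChain G)) : ℝ≥0∞ :=
  ⨅ (m : V → ℝ≥0∞) (_ : Admissible m F), ∑' v, (m v) ^ 2

/-- Chains connecting the set `A` to `∞`: infinite chains starting in `A` that
eventually leave every finite set. -/
def ChainSetToInf {V : Type*} (G : SimpleGraph V) (A : Set V) : Set (GChain G) :=
  {c | c.len = ⊤ ∧ c.f 0 ∈ A ∧ ∀ K : Set V, K.Finite → ∃ N : ℕ, ∀ n ≥ N, c.f n ∉ K}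

/-- Chains connecting `v₀` to `∞`. -/
def ChainToInf {V : Type*} (G : SimpleGraph V) (v0 : V) : Set (GChain G) :=
  ChainSetToInf G {v0}

/-- Finite chains connecting the set `A` to the set `B`. -/
def ChainConn {V : Type*} (G : SimpleGraph V) (A B : Set V) : Set (GChain G) :=
  {c | ∃ n : ℕ, c.len = (n : ℕ∞) ∧ c.f 0 ∈ A ∧ c.f n ∈ B}

/-- A set of vertices is connected (a domain) if it is nonempty and any two of its
vertices are joined by a walk all of whose vertices lie in the set. -/
def VConnected {V : Type*} (G : SimpleGraph V) (S : Set V) : Prop :=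
  S.Nonempty ∧ ∀ a ∈ S, ∀ b ∈ S, ∃ w : G.Walk a b, ∀ x ∈ w.support, x ∈ S

/-- `B` separates `S` from `∞`: every chain connecting `S` to `∞` meets `B`. -/
def Separates {V : Type*} (G : SimpleGraph V) (B S : Set V) : Prop :=
  ∀ c ∈ ChainSetToInf G S, ∃ n : ℕ, c.f n ∈ B

/-- `A` is an annulus with inner component `Inn` (finite) and outer component `Out`. -/
structure IsAnnulus {V : Type*} (G : SimpleGraph V) (A Inn Out : Set V) : Prop where
  compl_eq : Aᶜ = Inn ∪ Out
  disj : Disjoint Inn Out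
  inner_fin : Inn.Finite
  inner_conn : VConnected G Inn
  outer_conn : VConnected G Out
  outer_inf : Out.Infinite

/-- The modulus of an annulus: modulus of the family of chains connecting its two
complementary components. -/
noncomputable def annMod {V : Type*} (G : SimpleGraph V) (Inn Out : Set V) : ℝ≥0∞ :=
  gmod G (ChainConn G Inn Out)

/-- A graph is parabolic if the modulus of the family of chains from a (hence every)
fixed vertex to infinity vanishes. -/
def GraphParabolic {V : Type*} (G : SimpleGraph V) : Prop :=
  ∀ v0 : V, gmod G (ChainToInf G v0) = 0

/-!
Series law: suppose every chain of `Γ` contains, for each `k`, a chain of `F k` running inside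
`T k`, and every vertex lies in at most `N` of the sets `T k`. Given masses `μ k` admissible for
`F k` with energies `E k`, the average `Σ E k⁻¹ 1_{T k} μ k / Σ E k⁻¹` is admissible for `Γ`, and
Cauchy–Schwarz bounds its energy by `N / Σ E k⁻¹`; hence `mod Γ · Σ 1 / mod (F k) ≤ N`.

Far enough out, `v` and `v₀` lie in the inner component of `A k` and no edge joins the two
components (a walk inside the inner domain followed by a ray in the infinite outer domain would
avoid `A k`). So a chain from `v` to `∞`, which must reach the outer component because `A (k + 1)`
separates `A k` from `∞`, crosses `A k` inside its closed neighbourhood; these neighbourhoods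
overlap at most `D + 1` times because the `A k` are disjoint. The divergence of
`Σ 1 / mod (A k)` then forces `mod = 0`.
-/

open Filter SimpleGraph

lemma tendsto_atTop_cofinite_iff {α : Type*} {f : ℕ → α} :
    Tendsto f atTop cofinite ↔ ∀ K : Set α, K.Finite → ∃ N, ∀ n ≥ N, f n ∉ K := by
  simp only [hasBasis_cofinite.tendsto_right_iff, eventually_atTop, Set.mem_compl_iff]

lemma ENNReal.sq_sum_le_card_mul_sum_sq {ι : Type*} (s : Finset ι) (f : ι → ℝ≥0∞) :
    (∑ i ∈ s, f i) ^ 2 ≤ s.card * ∑ i ∈ s, f i ^ 2 := by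
  have := ENNReal.rpow_sum_le_const_mul_sum_rpow (s := s) (f := f) one_le_two
  norm_num at this
  exact_mod_cast this

lemma ENNReal.tsum_nat_add_eq_top {f : ℕ → ℝ≥0∞} (hf : ∀ n, f n ≠ ⊤) (h : ∑' n, f n = ⊤)
    (K : ℕ) : ∑' n, f (n + K) = ⊤ := by
  rw [← (ENNReal.summable (f := fun n => f (n + K))).sum_add_tsum_nat_add'] at h
  exact (ENNReal.add_eq_top.1 h).resolve_left (ENNReal.sum_ne_top.2 fun n _ => hf n)

section

variable {V : Type*} {G : SimpleGraph V}

namespace GChain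

def ofAdj (f : ℕ → V) (hf : ∀ n, G.Adj (f n) (f (n + 1))) (len : ℕ∞) : GChain G :=
  ⟨f, len, fun n _ => hf n⟩

lemma adj_of_len_eq_top {c : GChain G} (h : c.len = ⊤) (n : ℕ) :
    G.Adj (c.f n) (c.f (n + 1)) :=
  c.adj n (h ▸ ENat.natCast_lt_top n)

lemma wlen_of_len_eq_top {c : GChain G} (h : c.len = ⊤) (m : V → ℝ≥0∞) :
    wlen m c = ∑' n, m (c.f n) := by
  simp [wlen, h]

lemma wlen_of_len_eq_coe {c : GChain G} {n : ℕ} (h : c.len = n) (m : V → ℝ≥0∞) :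
    wlen m c = ∑ t ∈ Finset.range (n + 1), m (c.f t) := by
  rw [wlen, h, tsum_eq_sum (s := Finset.range (n + 1)) fun t ht => if_neg ?_]
  · exact Finset.sum_congr rfl fun t ht => if_pos (by simpa [Nat.lt_succ_iff] using ht)
  · simpa [Nat.lt_succ_iff] using ht

lemma wlen_const_mul (a : ℝ≥0∞) (m : V → ℝ≥0∞) (c : GChain G) :
    wlen (fun v => a * m v) c = a * wlen m c := by
  rw [wlen, wlen, ← ENNReal.tsum_mul_left]
  exact tsum_congr fun i => by split_ifs <;> simp

lemma wlen_finsetSum {ι : Type*} (s : Finset ι) (m : ι → V → ℝ≥0∞) (c : GChain G) :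
    wlen (fun v => ∑ k ∈ s, m k v) c = ∑ k ∈ s, wlen (m k) c := by
  simp only [wlen]
  rw [← Summable.tsum_finsetSum fun k _ => ENNReal.summable]
  exact tsum_congr fun i => by split_ifs <;> simp

end GChain

open GChain

lemma mem_chainSetToInf_iff {A : Set V} {c : GChain G} :
    c ∈ ChainSetToInf G A ↔ c.len = ⊤ ∧ c.f 0 ∈ A ∧ Tendsto c.f atTop cofinite := by
  rw [tendsto_atTop_cofinite_iff]; rfl

lemma ofAdj_mem_chainSetToInf {A : Set V} {f : ℕ → V} (hf : ∀ n, G.Adj (f n) (f (n + 1)))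
    (h0 : f 0 ∈ A) (htend : Tendsto f atTop cofinite) : ofAdj f hf ⊤ ∈ ChainSetToInf G A :=
  mem_chainSetToInf_iff.2 ⟨rfl, h0, htend⟩

lemma gmod_le_of_admissible {F : Set (GChain G)} {m : V → ℝ≥0∞} (hm : Admissible m F) :
    gmod G F ≤ ∑' v, m v ^ 2 :=
  iInf₂_le m hm

lemma gmod_ne_zero_of_mem {F : Set (GChain G)} {c : GChain G} (hc : c ∈ F) {n : ℕ}
    (hn : c.len = n) : gmod G F ≠ 0 := by
  refine (ENNReal.pow_pos (ENNReal.inv_pos.2 (ENNReal.natCast_ne_top (n + 1))) 2).trans_le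
    (le_iInf₂ fun m hm => ?_) |>.ne'
  have hsum : ∑ _t ∈ Finset.range (n + 1), ((n + 1 : ℕ) : ℝ≥0∞)⁻¹ ≤
      ∑ t ∈ Finset.range (n + 1), m (c.f t) := by
    rw [Finset.sum_const, Finset.card_range, nsmul_eq_mul,
      ENNReal.mul_inv_cancel (by positivity) (ENNReal.natCast_ne_top _), ← wlen_of_len_eq_coe hn]
    exact hm c hc
  obtain ⟨t, -, ht⟩ := ENNReal.exists_le_of_sum_le Finset.nonempty_range_add_one hsum
  calc (((n + 1 : ℕ) : ℝ≥0∞)⁻¹) ^ 2 ≤ m (c.f t) ^ 2 := by gcongr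
    _ ≤ ∑' v, m v ^ 2 := ENNReal.le_tsum _

section SeriesLaw

variable {ι : Type*} {Γ : Set (GChain G)} {F : ι → Set (GChain G)} {T : ι → Set V} {N : ℕ}

lemma sq_sum_mul_indicator_le (hT : ∀ v, {k | v ∈ T k}.encard ≤ N) (s : Finset ι)
    (a : ι → ℝ≥0∞) (μ : ι → V → ℝ≥0∞) (v : V) :
    (∑ k ∈ s, a k * (T k).indicator (μ k) v) ^ 2 ≤ N * ∑ k ∈ s, (a k * μ k v) ^ 2 := by
  classical
  let s' := s.filter fun k => v ∈ T k
  have hcard : (s'.card : ℝ≥0∞) ≤ N := by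
    have : (s'.card : ℕ∞) ≤ N := by
      rw [← Set.encard_coe_eq_coe_finsetCard]
      exact (Set.encard_le_encard fun k hk => (Finset.mem_filter.1 hk).2).trans (hT v)
    exact_mod_cast this
  calc (∑ k ∈ s, a k * (T k).indicator (μ k) v) ^ 2 = (∑ k ∈ s', a k * μ k v) ^ 2 := by
        rw [Finset.sum_filter]
        simp [Set.indicator_apply]
    _ ≤ s'.card * ∑ k ∈ s', (a k * μ k v) ^ 2 := ENNReal.sq_sum_le_card_mul_sum_sq _ _
    _ ≤ N * ∑ k ∈ s, (a k * μ k v) ^ 2 := by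
        gcongr
        exact Finset.filter_subset _ _

lemma gmod_mul_sum_le (hT : ∀ v, {k | v ∈ T k}.encard ≤ N)
    (hres : ∀ k m, Admissible m (F k) → Admissible ((T k).indicator m) Γ)
    (s : Finset ι) (a : ι → ℝ≥0∞) (μ : ι → V → ℝ≥0∞)
    (hadm : ∀ k ∈ s, a k ≠ 0 → Admissible (μ k) (F k))
    (hE : ∀ k ∈ s, a k * ∑' v, μ k v ^ 2 ≤ 1) :
    gmod G Γ * ∑ k ∈ s, a k ≤ N := by
  set W := ∑ k ∈ s, a k
  obtain hW0 | hW0 := eq_or_ne W 0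
  · simp [hW0]
  obtain hWtop | hWtop := eq_or_ne W ⊤
  · -- an infinite weight forces an admissible mass of zero energy
    obtain ⟨k, hk, hak⟩ := ENNReal.sum_eq_top.1 hWtop
    have hE0 : ∑' v, μ k v ^ 2 = 0 := by
      by_contra hne
      simpa [hak, ENNReal.top_mul hne] using hE k hk
    have hΓ : gmod G Γ = 0 := by
      refine le_antisymm ?_ zero_le
      refine (gmod_le_of_admissible (hres k _ (hadm k hk (by simp [hak])))).trans ?_
      exact hE0 ▸ ENNReal.tsum_le_tsum fun v => by gcongr; exact Set.indicator_le_self _ _ v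
    simp [hΓ]
  let m : V → ℝ≥0∞ := fun v => W⁻¹ * ∑ k ∈ s, a k * (T k).indicator (μ k) v
  have hm : Admissible m Γ := by
    intro c hc
    calc 1 = W⁻¹ * W := (ENNReal.inv_mul_cancel hW0 hWtop).symm
      _ ≤ W⁻¹ * ∑ k ∈ s, a k * wlen ((T k).indicator (μ k)) c := by
        refine mul_le_mul_right (Finset.sum_le_sum fun k hk => ?_) _
        obtain hak | hak := eq_or_ne (a k) 0
        · simp [hak]
        exact le_mul_of_one_le_right' (hres k _ (hadm k hk hak) c hc)
      _ = wlen m c := by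
        simp only [m, wlen_const_mul, wlen_finsetSum]
  have henergy : ∑' v, m v ^ 2 ≤ W⁻¹ ^ 2 * (N * W) :=
    calc ∑' v, m v ^ 2 = W⁻¹ ^ 2 * ∑' v, (∑ k ∈ s, a k * (T k).indicator (μ k) v) ^ 2 := by
          simp only [m, mul_pow, ENNReal.tsum_mul_left]
      _ ≤ W⁻¹ ^ 2 * ∑' v, N * ∑ k ∈ s, (a k * μ k v) ^ 2 := by
          gcongr with v
          exact sq_sum_mul_indicator_le hT s a μ v
      _ = W⁻¹ ^ 2 * (N * ∑ k ∈ s, a k * (a k * ∑' v, μ k v ^ 2)) := by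
          rw [ENNReal.tsum_mul_left, Summable.tsum_finsetSum fun k _ => ENNReal.summable]
          refine congrArg _ (congrArg _ (Finset.sum_congr rfl fun k _ => ?_))
          rw [← ENNReal.tsum_mul_left, ← ENNReal.tsum_mul_left]
          exact tsum_congr fun v => by ring
      _ ≤ W⁻¹ ^ 2 * (N * W) :=
          mul_le_mul_right (mul_le_mul_right (Finset.sum_le_sum fun k hk =>
            mul_le_of_le_one_right' (hE k hk)) _) _
  calc gmod G Γ * W ≤ W⁻¹ ^ 2 * (N * W) * W := by
        gcongr
        exact (gmod_le_of_admissible hm).trans henergy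
    _ = N * (W⁻¹ * W) * (W⁻¹ * W) := by ring
    _ = N := by simp [ENNReal.inv_mul_cancel hW0 hWtop]

theorem gmod_mul_tsum_inv_le (hT : ∀ v, {k | v ∈ T k}.encard ≤ N)
    (hres : ∀ k m, Admissible m (F k) → Admissible ((T k).indicator m) Γ) :
    gmod G Γ * ∑' k, (gmod G (F k))⁻¹ ≤ N := by
  -- `w k m` is the reciprocal energy of `m` if `m` is admissible for `F k`, and `0` otherwise
  let w : ι → (V → ℝ≥0∞) → ℝ≥0∞ := fun k m =>
    ⨆ _ : Admissible m (F k), (∑' v, m v ^ 2)⁻¹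
  have hw : ∀ k, (gmod G (F k))⁻¹ = ⨆ μ : ι → V → ℝ≥0∞, w k (μ k) := fun k => by
    rw [show (⨆ μ : ι → V → ℝ≥0∞, w k (μ k)) = ⨆ m, w k m from
      (Function.surjective_eval (β := fun _ : ι => V → ℝ≥0∞) k).iSup_comp (w k)]
    simp only [gmod, ENNReal.inv_iInf, w]
  have hsum : ∀ s : Finset ι,
      ∑ k ∈ s, (gmod G (F k))⁻¹ = ⨆ μ : ι → V → ℝ≥0∞, ∑ k ∈ s, w k (μ k) := fun s => by
    simp_rw [hw]
    refine ENNReal.finsetSum_iSup fun μ₁ μ₂ =>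
      ⟨fun k => if w k (μ₁ k) ≤ w k (μ₂ k) then μ₂ k else μ₁ k, fun k => ?_⟩
    dsimp only
    split_ifs with h
    exacts [⟨h, le_rfl⟩, ⟨le_rfl, (not_le.1 h).le⟩]
  rw [ENNReal.tsum_eq_iSup_sum, ENNReal.mul_iSup]
  refine iSup_le fun s => ?_
  rw [hsum, ENNReal.mul_iSup]
  refine iSup_le fun μ => gmod_mul_sum_le hT hres s _ μ (fun k _ hk => ?_) fun k _ => ?_
  · by_contra hadm
    exact hk (by simp [w, hadm])
  · calc w k (μ k) * ∑' v, μ k v ^ 2 ≤ (∑' v, μ k v ^ 2)⁻¹ * ∑' v, μ k v ^ 2 := by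
          gcongr
          exact iSup_const_le
      _ ≤ 1 := ENNReal.inv_mul_le_one _

end SeriesLaw

def reachWithin (G : SimpleGraph V) (U : Set V) (v : V) : Set V :=
  {y | ∃ w : G.Walk v y, ∀ x ∈ w.support, x ∈ U}

lemma mem_of_mem_reachWithin {U : Set V} {v y : V} (hy : y ∈ reachWithin G U v) : v ∈ U :=
  let ⟨w, hw⟩ := hy
  hw v w.start_mem_support

/-- The step of König's lemma: removing `v` splits what `v` reaches into finitely many pieces,
one through each neighbour. -/
lemma exists_adj_reachWithin_diff_infinite (hlf : ∀ v : V, (G.neighborSet v).Finite)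
    {U : Set V} {v : V} (h : (reachWithin G U v).Infinite) :
    ∃ u, G.Adj v u ∧ (reachWithin G (U \ {v}) u).Infinite := by
  classical
  by_contra! hfin
  refine h ((((hlf v).biUnion fun u hu => hfin u hu).insert v).subset ?_)
  rintro y ⟨w, hw⟩
  obtain rfl | hvy := eq_or_ne v y
  · exact Set.mem_insert v _
  obtain ⟨u, hvu, q, hq⟩ := Walk.exists_eq_cons_of_ne hvy w.bypass
  have hpath := w.bypass_isPath
  rw [hq, Walk.cons_isPath_iff] at hpath
  refine Set.mem_insert_of_mem _ (Set.mem_biUnion hvu ⟨q, fun x hx => ⟨?_, ?_⟩⟩)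
  · exact hw x (w.support_bypass_subset_support (hq ▸ q.support_subset_support_cons hvu hx))
  · rintro rfl
    exact hpath.2 hx

lemma exists_ray_of_infinite (hlf : ∀ v : V, (G.neighborSet v).Finite) {S : Set V}
    (hS : S.Infinite) (hSc : VConnected G S) {x : V} (hx : x ∈ S) :
    ∃ f : ℕ → V, (∀ n, G.Adj (f n) (f (n + 1))) ∧ f 0 = x ∧ (∀ n, f n ∈ S) ∧
      Tendsto f atTop cofinite := by
  let P := {p : V × Set V // (reachWithin G p.2 p.1).Infinite}
  choose next hnext using fun p : P => exists_adj_reachWithin_diff_infinite hlf p.2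
  let step : P → P := fun p => ⟨(next p, p.1.2 \ {p.1.1}), (hnext p).2⟩
  let seq : ℕ → P := fun n => step^[n] ⟨(x, S), hS.mono fun y hy => hSc.2 x hx y hy⟩
  have hsucc : ∀ n, seq (n + 1) = step (seq n) := fun n => Function.iterate_succ_apply' _ _ _
  let f : ℕ → V := fun n => (seq n).1.1
  have hmem : ∀ n, f n ∈ (seq n).1.2 := fun n =>
    mem_of_mem_reachWithin (seq n).2.nonempty.some_mem
  have hanti : Antitone fun n => (seq n).1.2 :=
    antitone_nat_of_succ_le fun n => by rw [hsucc]; exact Set.sdiff_subset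
  have hleave : ∀ n, f n ∉ (seq (n + 1)).1.2 := fun n => by rw [hsucc]; simp [step, f]
  have hinj : Function.Injective f := Function.Injective.of_lt_imp_ne fun m n hmn hfmn =>
    hleave m (hanti (Nat.succ_le_of_lt hmn) (hfmn ▸ hmem n))
  refine ⟨f, fun n => ?_, rfl, fun n => hanti (Nat.zero_le n) (hmem n), ?_⟩
  · rw [show f (n + 1) = (seq (n + 1)).1.1 from rfl, hsucc]
    exact (hnext (seq n)).1
  · rw [← Nat.cofinite_eq_atTop]
    exact hinj.tendsto_cofinite

lemma Separates.of_adj {B : Set V} {a b : V} (hB : Separates G B {a}) (hab : G.Adj a b)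
    (ha : a ∉ B) : Separates G B {b} := by
  intro c hc
  obtain ⟨hlen, h0, htend⟩ := mem_chainSetToInf_iff.1 hc
  let f : ℕ → V := fun | 0 => a | n + 1 => c.f n
  have hf : ∀ n, G.Adj (f n) (f (n + 1)) := by
    rintro (_ | n)
    · simpa [f, Set.mem_singleton_iff.1 h0] using hab
    · exact adj_of_len_eq_top hlen n
  obtain ⟨_ | n, hn⟩ :=
    hB _ (ofAdj_mem_chainSetToInf hf rfl ((tendsto_add_atTop_iff_nat 1).1 htend))
  · exact absurd hn ha
  · exact ⟨n, hn⟩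

lemma Separates.of_walk {B : Set V} {a b : V} (hB : Separates G B {a}) (w : G.Walk a b)
    (hw : ∀ x ∈ w.support, x ∉ B) : Separates G B {b} := by
  induction w with
  | nil => exact hB
  | cons hadj p ih =>
    exact ih (hB.of_adj hadj (hw _ (Walk.start_mem_support _))) fun x hx =>
      hw x (Walk.support_cons hadj p ▸ List.mem_cons_of_mem _ hx)

lemma exists_crossing {α : Type*} {f : ℕ → α} {P Q : Set α} (hPQ : Disjoint P Q)
    (h0 : f 0 ∈ P) (hQ : ∃ n, f n ∈ Q) :
    ∃ i j, i < j ∧ f i ∈ P ∧ f j ∈ Q ∧ ∀ t, i < t → t < j → f t ∉ P ∧ f t ∉ Q := by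
  classical
  let j := Nat.find hQ
  have hj0 : j ≠ 0 := fun h => hPQ.notMem_of_mem_left h0 (h ▸ Nat.find_spec hQ)
  let i := Nat.findGreatest (fun t => f t ∈ P) (j - 1)
  refine ⟨i, j, (Nat.findGreatest_le _).trans_lt (by omega),
    Nat.findGreatest_spec (P := fun t => f t ∈ P) (Nat.zero_le _) h0, Nat.find_spec hQ,
    fun t hit htj => ⟨Nat.findGreatest_is_greatest hit (by omega), Nat.find_min hQ htj⟩⟩

def closedNbhd (G : SimpleGraph V) (A : Set V) : Set V :=
  {v | ∃ u ∈ A, u = v ∨ G.Adj v u}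

lemma encard_setOf_mem_closedNbhd_le {ι : Type*} {A : ι → Set V}
    (hdisj : Pairwise fun k l => Disjoint (A k) (A l)) (hlf : ∀ v : V, (G.neighborSet v).Finite)
    {D : ℕ} (hval : ∀ v : V, (G.neighborSet v).ncard ≤ D) (v : V) :
    {k | v ∈ closedNbhd G (A k)}.encard ≤ (D + 1 : ℕ) := by
  have : Nonempty V := ⟨v⟩
  choose! u hu using fun k (hk : v ∈ closedNbhd G (A k)) => hk
  calc {k | v ∈ closedNbhd G (A k)}.encard ≤ (insert v (G.neighborSet v)).encard := by
        refine Set.encard_le_encard_of_injOn (f := u) (fun k hk => (hu k hk).2)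
          fun k hk l hl hkl => ?_
        exact hdisj.eq (Set.not_disjoint_iff.2 ⟨u k, (hu k hk).1, hkl ▸ (hu l hl).1⟩)
    _ ≤ (G.neighborSet v).encard + 1 := Set.encard_insert_le _ _
    _ ≤ (D + 1 : ℕ) := by
        rw [← (hlf v).cast_ncard_eq]
        exact_mod_cast Nat.succ_le_succ (hval v)

namespace IsAnnulus

variable {A Inn Out : Set V}

lemma notMem_iff (h : IsAnnulus G A Inn Out) {x : V} : x ∉ A ↔ x ∈ Inn ∨ x ∈ Out := by
  rw [← Set.mem_compl_iff, h.compl_eq]; rfl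

lemma annMod_ne_zero (h : IsAnnulus G A Inn Out) (hconn : G.Connected) :
    annMod G Inn Out ≠ 0 := by
  obtain ⟨x, hx⟩ := h.inner_conn.1
  obtain ⟨y, hy⟩ := h.outer_inf.nonempty
  obtain ⟨w⟩ := hconn.preconnected x y
  refine gmod_ne_zero_of_mem (c := ⟨w.getVert, w.length, fun i hi => w.adj_getVert_succ ?_⟩)
    ⟨w.length, rfl, ?_, ?_⟩ rfl
  · exact_mod_cast hi
  · simpa using hx
  · simpa using hy

lemma not_separates_of_mem_outer (h : IsAnnulus G A Inn Out)
    (hlf : ∀ v : V, (G.neighborSet v).Finite) {y : V} (hy : y ∈ Out) : ¬ Separates G A {y} := by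
  intro hsep
  obtain ⟨f, hf, hf0, hfOut, htend⟩ := exists_ray_of_infinite hlf h.outer_inf h.outer_conn hy
  obtain ⟨n, hn⟩ := hsep _ (ofAdj_mem_chainSetToInf hf hf0 htend)
  exact h.notMem_iff.2 (Or.inr (hfOut n)) hn

lemma not_adj_inner_outer (h : IsAnnulus G A Inn Out) (hlf : ∀ v : V, (G.neighborSet v).Finite)
    {v : V} (hv : v ∈ Inn) (hsep : Separates G A {v}) {x y : V} (hx : x ∈ Inn) (hy : y ∈ Out) :
    ¬ G.Adj x y := by
  intro hxy
  obtain ⟨w, hw⟩ := h.inner_conn.2 v hv x hx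
  have hnot : ∀ z ∈ Inn, z ∉ A := fun z hz => h.notMem_iff.2 (Or.inl hz)
  exact h.not_separates_of_mem_outer hlf hy
    ((hsep.of_walk w fun z hz => hnot z (hw z hz)).of_adj hxy (hnot x hx))

/-- A ray to `∞` eventually leaves the finite set `Inn`, and cannot then stay in `A` because
`A'` separates `A` from `∞`. -/
lemma exists_mem_outer (h : IsAnnulus G A Inn Out) {A' : Set V} (hA' : Disjoint A A')
    (hnest : Separates G A' A) {f : ℕ → V} (hf : ∀ n, G.Adj (f n) (f (n + 1)))
    (htend : Tendsto f atTop cofinite) : ∃ n, f n ∈ Out := by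
  by_contra! hout
  obtain ⟨N, hN⟩ := eventually_atTop.1 (htend.eventually h.inner_fin.compl_mem_cofinite)
  have hA : ∀ n, f (n + N) ∈ A := fun n => by
    by_contra hn
    exact (h.notMem_iff.1 hn).elim (hN _ (Nat.le_add_left N n)) (hout _)
  have hshift : ∀ n, G.Adj (f (n + N)) (f (n + 1 + N)) := fun n => by
    rw [Nat.add_right_comm]
    exact hf (n + N)
  obtain ⟨n, hn⟩ :=
    hnest _ (ofAdj_mem_chainSetToInf hshift (hA 0) ((tendsto_add_atTop_iff_nat N).2 htend))
  exact hA'.notMem_of_mem_left (hA n) hn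

lemma admissible_indicator_chainToInf (h : IsAnnulus G A Inn Out) {A' : Set V}
    (hA' : Disjoint A A') (hnest : Separates G A' A) (hedge : ∀ x ∈ Inn, ∀ y ∈ Out, ¬ G.Adj x y)
    {v : V} (hv : v ∈ Inn) {m : V → ℝ≥0∞} (hm : Admissible m (ChainConn G Inn Out)) :
    Admissible ((closedNbhd G A).indicator m) (ChainToInf G v) := by
  intro c hc
  obtain ⟨hlen, h0, htend⟩ := mem_chainSetToInf_iff.1 hc
  have hadj := adj_of_len_eq_top hlen
  obtain ⟨i, j, hij, hi, hj, hmid⟩ := exists_crossing h.disj (Set.mem_singleton_iff.1 h0 ▸ hv)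
    (h.exists_mem_outer hA' hnest hadj htend)
  have hmidA : ∀ t, i < t → t < j → c.f t ∈ A := fun t hit htj => by
    by_contra hA
    exact (h.notMem_iff.1 hA).elim (hmid t hit htj).1 (hmid t hit htj).2
  -- with no edge from `Inn` to `Out` the crossing has an interior vertex, so it runs inside the
  -- closed neighbourhood of `A`
  have hij2 : i + 1 < j := lt_of_le_of_ne hij fun hji => hedge _ hi _ hj (hji ▸ hadj i)
  have hnbhd : ∀ t, i ≤ t → t ≤ j → c.f t ∈ closedNbhd G A := by
    intro t hit htj
    rcases hit.eq_or_lt with rfl | hit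
    · exact ⟨_, hmidA (i + 1) (by omega) hij2, Or.inr (hadj i)⟩
    rcases htj.eq_or_lt with rfl | htj
    · refine ⟨_, hmidA (t - 1) (by omega) (by omega), Or.inr ?_⟩
      simpa [Nat.sub_add_cancel (by omega : 1 ≤ t)] using (hadj (t - 1)).symm
    · exact ⟨_, hmidA t hit htj, Or.inl rfl⟩
  let d : GChain G := ofAdj (fun t => c.f (i + t)) (fun t => hadj (i + t)) (j - i : ℕ)
  have hd : d ∈ ChainConn G Inn Out :=
    ⟨j - i, rfl, hi, by simpa [d, ofAdj, Nat.add_sub_cancel' hij.le] using hj⟩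
  calc (1 : ℝ≥0∞) ≤ wlen m d := hm d hd
    _ = ∑ t ∈ Finset.range (j - i + 1), (closedNbhd G A).indicator m (c.f (i + t)) := by
      rw [wlen_of_len_eq_coe rfl]
      refine Finset.sum_congr rfl fun t ht =>
        (Set.indicator_of_mem (hnbhd _ (by omega) ?_) m).symm
      have := Finset.mem_range.1 ht
      omega
    _ ≤ ∑' t, (closedNbhd G A).indicator m (c.f (i + t)) := ENNReal.sum_le_tsum _
    _ ≤ ∑' n, (closedNbhd G A).indicator m (c.f n) :=
      ENNReal.tsum_comp_le_tsum_of_injective (add_right_injective i) _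
    _ = wlen _ c := (wlen_of_len_eq_top hlen _).symm

end IsAnnulus

lemma eventually_mem_inner {ι : Type*} (hlf : ∀ v : V, (G.neighborSet v).Finite)
    (hconn : G.Connected) {A Inn Out : ι → Set V} (hAnn : ∀ k, IsAnnulus G (A k) (Inn k) (Out k))
    (hdisj : Pairwise fun k l => Disjoint (A k) (A l)) {v0 : V}
    (hsep : ∀ k, Separates G (A k) {v0}) (v : V) : ∀ᶠ k in cofinite, v ∈ Inn k := by
  obtain ⟨w⟩ := hconn.preconnected v0 v
  have hfin : {k | ∃ x ∈ w.support, x ∈ A k}.Finite := by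
    refine (w.support.finite_toSet.biUnion fun x _ => ?_).subset
      fun k ⟨x, hx, hxk⟩ => Set.mem_biUnion hx hxk
    exact Set.Subsingleton.finite fun k hk l hl => hdisj.eq (Set.not_disjoint_iff.2 ⟨x, hk, hl⟩)
  filter_upwards [hfin.eventually_cofinite_notMem] with k hk
  have hwA : ∀ x ∈ w.support, x ∉ A k := fun x hx hxA => hk ⟨x, hx, hxA⟩
  refine ((hAnn k).notMem_iff.1 (hwA v w.end_mem_support)).resolve_right fun hv => ?_
  exact (hAnn k).not_separates_of_mem_outer hlf hv ((hsep k).of_walk w hwA)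

end

theorem graphParabolic_of_annuli_general {V : Type*} (G : SimpleGraph V)
    (hconn : G.Connected)
    (D : ℕ) (hval : ∀ v : V, (G.neighborSet v).ncard ≤ D)
    (hlocfin : ∀ v : V, (G.neighborSet v).Finite)
    (v0 : V) (A Inn Out : ℕ → Set V)
    (hAnn : ∀ k, IsAnnulus G (A k) (Inn k) (Out k))
    (hdisj : Pairwise fun k l => Disjoint (A k) (A l))
    (hnested : ∀ k, Separates G (A (k + 1)) (A k))
    (hsep : ∀ k, Separates G (A k) {v0})
    (hsum : ∑' k : ℕ, (annMod G (Inn k) (Out k))⁻¹ = ⊤) :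
    GraphParabolic G := by
  intro v
  have hinner := eventually_mem_inner hlocfin hconn hAnn hdisj hsep
  obtain ⟨K, hK⟩ := eventually_atTop.1 (Nat.cofinite_eq_atTop ▸ (hinner v).and (hinner v0))
  have htail : ∑' k, (annMod G (Inn (k + K)) (Out (k + K)))⁻¹ = ⊤ :=
    ENNReal.tsum_nat_add_eq_top (fun k => ENNReal.inv_ne_top.2 ((hAnn k).annMod_ne_zero hconn))
      hsum K
  have hbound : gmod G (ChainToInf G v) * ∑' k, (annMod G (Inn (k + K)) (Out (k + K)))⁻¹ ≤
      (D + 1 : ℕ) := by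
    refine gmod_mul_tsum_inv_le (F := fun k => ChainConn G (Inn (k + K)) (Out (k + K)))
      (T := fun k => closedNbhd G (A (k + K)))
      (encard_setOf_mem_closedNbhd_le (hdisj.comp_of_injective (add_left_injective K)) hlocfin hval)
      fun k m hm => ?_
    obtain ⟨hv, hv0⟩ := hK (k + K) (Nat.le_add_left K k)
    exact (hAnn _).admissible_indicator_chainToInf (hdisj (by omega)) (hnested _)
      (fun x hx y hy => (hAnn _).not_adj_inner_outer hlocfin hv0 (hsep _) hx hy) hv hm
  rw [htail] at hbound
  by_contra hne
  simp [ENNReal.mul_top hne] at hbound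

/-- An infinite, connected, locally finite graph of finite valence is parabolic
whenever there exists a sequence of pairwise disjoint nested annuli, each separating
a fixed vertex `v₀` from `∞`, with `Σ_k 1/mod(A_k) = ∞`. -/
theorem graphParabolic_of_annuli {V : Type*} (G : SimpleGraph V)
    (hinf : Infinite V) (hconn : G.Connected)
    (D : ℕ) (hval : ∀ v : V, (G.neighborSet v).ncard ≤ D)
    (hlocfin : ∀ v : V, (G.neighborSet v).Finite)
    (v0 : V) (A Inn Out : ℕ → Set V)
    (hAnn : ∀ k, IsAnnulus G (A k) (Inn k) (Out k))
    (hdisj : Pairwise fun k l => Disjoint (A k) (A l))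
    (hnested : ∀ k, Separates G (A (k + 1)) (A k))
    (hsep : ∀ k, Separates G (A k) {v0})
    (hsum : ∑' k : ℕ, (annMod G (Inn k) (Out k))⁻¹ = ⊤) :
    GraphParabolic G :=
  graphParabolic_of_annuli_general G hconn D hval hlocfin v0 A Inn Out hAnn hdisj hnested hsep hsum
end

section
/- Suppose a positive decreasing function L with L(ε₀) ≥ 1 satisfies the growth condition 2^{[L(ε₁)]} + … + 2^{[L(ε_k)]} ≤ C·2^{[L(ε_{k+1})]} for all k ≥ 1 and some constant C > 0. Then for each k the quantity k + Σ_{l=1}^{[L(ε_{k+1})]} 2^l/2^{2(l−1)} + ((2b_k)² − (2a_k)²)/2^{2([L(ε_{k+1})]−1)} is bounded above by C′·k for a constant C′ depending only on C, where a_k = 2^{[L(ε₁)]} + 2Σ_{j=2}^{k} 2^{[L(ε_j)]} − k + 1 and b_k = 2^{[L(ε₁)]} + 2Σ_{j=2}^{k+1} 2^{[L(ε_j)]} − k − 1. -/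
/-!
Write `P = 2^[L(ε₁)]`, `T = Σ_{j=2}^k 2^[L(ε_j)]` and `Q = 2^[L(ε_{k+1})]`. Then
`(2b_k)² − (2a_k)² = 16 (Q − 1)(P + 2T + Q − k)`, and the growth condition `P + T ≤ C Q` bounds
this by `16 (2C + 1) Q²`, while the denominator is at least `Q² / 4`: the annulus term is at most
`64 (2C + 1)`. The remaining sum is `Σ_{l ≥ 1} 4 · 2^{-l} ≤ 4`, so `C' = 128 C + 69` works.
-/

open Finset

lemma sum_Icc_two_pow_div_two_pow_two_mul_sub_one_le (M : ℕ) :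
    ∑ l ∈ Icc 1 M, (2 : ℝ) ^ l / 2 ^ (2 * (l - 1)) ≤ 4 := by
  have hterm (i : ℕ) : (2 : ℝ) ^ (1 + i) / 2 ^ (2 * (1 + i - 1)) = 2 * (1 / 2) ^ i := by
    rw [Nat.add_sub_cancel_left, pow_mul', one_div_pow, pow_add]
    field_simp
  rw [← Ico_add_one_right_eq_Icc, sum_Ico_eq_sum_range, Nat.add_sub_cancel]
  simp only [hterm, ← mul_sum]
  linarith [sum_geometric_two_le M]

lemma two_pow_sq_le_four_mul_two_pow_two_mul_sub_one (M : ℕ) :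
    ((2 : ℝ) ^ M) ^ 2 ≤ 4 * 2 ^ (2 * (M - 1)) := by
  rcases M with _ | m
  · norm_num
  · rw [Nat.add_sub_cancel, pow_mul']
    exact le_of_eq (by ring)

lemma sub_one_mul_le_mul {Q Y Z : ℝ} (hQ : 1 ≤ Q) (hYZ : Y ≤ Z) (hZ : 0 ≤ Z) :
    (Q - 1) * Y ≤ Q * Z := by
  rcases le_total Y 0 with hY | hY
  · nlinarith
  · nlinarith

lemma annulus_sq_sub_sq_div_le {P T Q x C D : ℝ} (hP : 0 ≤ P) (hT : 0 ≤ T) (hx : 0 ≤ x)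
    (hQ : 1 ≤ Q) (hD : Q ^ 2 ≤ 4 * D) (hgrowth : P + T ≤ C * Q) :
    ((2 * (P + 2 * (T + Q) - x - 1)) ^ 2 - (2 * (P + 2 * T - x + 1)) ^ 2) / D
      ≤ 64 * (2 * C + 1) := by
  have hZ : P + 2 * T + Q ≤ (2 * C + 1) * Q := by linarith
  have hC : 0 ≤ 2 * C + 1 := by nlinarith
  have hD0 : 0 < D := by nlinarith
  rw [div_le_iff₀ hD0]
  calc ((2 * (P + 2 * (T + Q) - x - 1)) ^ 2 - (2 * (P + 2 * T - x + 1)) ^ 2)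
      = 16 * ((Q - 1) * (P + 2 * T + Q - x)) := by ring
    _ ≤ 16 * (Q * ((2 * C + 1) * Q)) :=
      mul_le_mul_of_nonneg_left (sub_one_mul_le_mul hQ (by linarith) (by nlinarith)) (by norm_num)
    _ = 16 * (2 * C + 1) * Q ^ 2 := by ring
    _ ≤ 16 * (2 * C + 1) * (4 * D) := by gcongr
    _ = 64 * (2 * C + 1) * D := by ring

theorem mass_bound_estimate (C : ℝ) (hC : 0 < C) :
    ∃ C' : ℝ, 0 < C' ∧
      ∀ (L : ℝ → ℝ) (ε : ℕ → ℝ) (ε₀ : ℝ),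
        (∀ x, 0 < x → x ≤ ε₀ → 0 < L x) →
        (∀ x y, 0 < x → x ≤ y → y ≤ ε₀ → L y ≤ L x) →
        1 ≤ L ε₀ →
        (∀ j, 0 < ε j) → (∀ j, ε (j + 1) ≤ ε j) → (∀ j, ε j ≤ ε₀) →
        (∀ k : ℕ, 1 ≤ k →
          (∑ j ∈ Finset.Icc 1 k, (2 : ℝ) ^ ⌊L (ε j)⌋₊) ≤
            C * 2 ^ ⌊L (ε (k + 1))⌋₊) →
        ∀ k : ℕ, 1 ≤ k →
          (let ak : ℝ := 2 ^ ⌊L (ε 1)⌋₊ +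
              2 * (∑ j ∈ Finset.Icc 2 k, (2 : ℝ) ^ ⌊L (ε j)⌋₊) - k + 1;
           let bk : ℝ := 2 ^ ⌊L (ε 1)⌋₊ +
              2 * (∑ j ∈ Finset.Icc 2 (k + 1), (2 : ℝ) ^ ⌊L (ε j)⌋₊) - k - 1;
           (k : ℝ) +
              (∑ l ∈ Finset.Icc 1 ⌊L (ε (k + 1))⌋₊,
                (2 : ℝ) ^ l / 2 ^ (2 * (l - 1))) +
              ((2 * bk) ^ 2 - (2 * ak) ^ 2) / 2 ^ (2 * (⌊L (ε (k + 1))⌋₊ - 1))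
            ≤ C' * k) := by
  refine ⟨128 * C + 69, by positivity, ?_⟩
  intro L ε ε₀ _ _ _ _ _ _ hgrowth k hk
  set e : ℕ → ℕ := fun j ↦ ⌊L (ε j)⌋₊
  have hsplit : ∑ j ∈ Icc 1 k, (2 : ℝ) ^ e j = 2 ^ e 1 + ∑ j ∈ Icc 2 k, (2 : ℝ) ^ e j := by
    rw [← add_sum_Ioc_eq_sum_Icc hk, ← Icc_add_one_left_eq_Ioc]
    rfl
  have hmass := annulus_sq_sub_sq_div_le (P := 2 ^ e 1) (x := k) (by positivity)
    (sum_nonneg fun j _ ↦ by positivity) (Nat.cast_nonneg k) (one_le_pow₀ one_le_two)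
    (two_pow_sq_le_four_mul_two_pow_two_mul_sub_one (e (k + 1))) (hsplit ▸ hgrowth k hk)
  have hk1 : (1 : ℝ) ≤ k := by exact_mod_cast hk
  dsimp only
  rw [sum_Icc_succ_top (by omega)]
  nlinarith [sum_Icc_two_pow_div_two_pow_two_mul_sub_one_le (e (k + 1))]
end
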